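/- Let P be a finite set of points in the plane with minimum enclosing circle C(P) centered at c. Let p₁, p₂, p₃ ∈ P be three consecutive points in clockwise order on C(P) (no other points of P on the arc from p₁ to p₃ through p₂). If the clockwise angle at c from p₁ to p₃ is at most π, then p₂ is not critical, i.e., C(P \ {p₂}) = C(P). -/

import Mathlib

/-!
Let `α < β ≤ π` be the clockwise angles at `c` from `p₁` to `p₂` and to `p₃`. Rotating `p₁ - c`
gives `sin β • (p₂ - c) = sin (β - α) • (p₁ - c) + sin α • (p₃ - c)`, with nonnegative
coefficients and `sin β ≤ sin (β - α) + sin α`. A point `p` of the circle lies in a disc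
`closedBall c' ρ'` with `ρ' ≤ ρ` iff `2 ⟪p - c, c' - c⟫ ≥ ρ² + ‖c' - c‖² - ρ'²`, a nonnegative
threshold, and such a linear lower bound passes from `p₁`, `p₃` to `p₂`. So every disc of radius
at most `ρ` containing `P \ {p₂}` contains `p₂`, hence cannot beat the minimum enclosing circle.
-/

noncomputable section

open Metric Real

/-- `IsMEC c ρ P` : the circle with center `c` and radius `ρ` is the minimum
enclosing circle of `P` (here in the plane modeled by `ℂ`). -/
def IsMEC (c : ℂ) (ρ : ℝ) (P : Set ℂ) : Prop :=
  P ⊆ Metric.closedBall c ρ ∧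
    ∀ c' ρ', P ⊆ Metric.closedBall c' ρ' → ρ ≤ ρ' ∧ (ρ' = ρ → c' = c)

/-- The clockwise angle at `c` measured from the ray `c → a` to the ray
`c → b`, normalized to lie in `[0, 2π)`. -/
def cwAngle (c a b : ℂ) : ℝ :=
  if Complex.arg ((a - c) / (b - c)) < 0 then
    Complex.arg ((a - c) / (b - c)) + 2 * π
  else Complex.arg ((a - c) / (b - c))

open scoped RealInnerProductSpace

lemma IsMEC.of_subset {c : ℂ} {ρ : ℝ} {P Q : Set ℂ} (h : IsMEC c ρ P) (hQP : Q ⊆ P)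
    (hcover : ∀ c' ρ', ρ' ≤ ρ → Q ⊆ closedBall c' ρ' → P ⊆ closedBall c' ρ') :
    IsMEC c ρ Q := by
  refine ⟨hQP.trans h.1, fun c' ρ' hQ => ?_⟩
  rcases le_or_gt ρ' ρ with hle | hlt
  · exact h.2 c' ρ' (hcover c' ρ' hle hQ)
  · exact ⟨hlt.le, fun heq => absurd heq hlt.ne'⟩

section InnerProductSpace

variable {E : Type*} [NormedAddCommGroup E] [InnerProductSpace ℝ E]

lemma mem_closedBall_iff_le_inner_of_mem_sphere {c c' p : E} {ρ ρ' : ℝ} (hρ' : 0 ≤ ρ')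
    (hp : p ∈ sphere c ρ) :
    p ∈ closedBall c' ρ' ↔ ρ ^ 2 + ‖c' - c‖ ^ 2 - ρ' ^ 2 ≤ 2 * ⟪p - c, c' - c⟫ := by
  rw [mem_sphere_iff_norm] at hp
  rw [mem_closedBall_iff_norm, ← sq_le_sq₀ (norm_nonneg _) hρ',
    show p - c' = (p - c) - (c' - c) by abel, norm_sub_sq_real, hp]
  constructor <;> intro h <;> linarith

lemma mem_closedBall_of_smul_sub_eq {c c' p₁ p₂ p₃ : E} {ρ ρ' a b d : ℝ}
    (h₁ : p₁ ∈ sphere c ρ) (h₂ : p₂ ∈ sphere c ρ) (h₃ : p₃ ∈ sphere c ρ) (hρ' : ρ' ≤ ρ)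
    (ha : 0 ≤ a) (hb : 0 ≤ b) (hd : 0 ≤ d) (hbd : 0 < b + d) (habd : a ≤ b + d)
    (hcomb : a • (p₂ - c) = b • (p₁ - c) + d • (p₃ - c))
    (hp₁ : p₁ ∈ closedBall c' ρ') (hp₃ : p₃ ∈ closedBall c' ρ') :
    p₂ ∈ closedBall c' ρ' := by
  have hρ'0 : 0 ≤ ρ' := nonempty_closedBall.mp ⟨p₁, hp₁⟩
  rw [mem_closedBall_iff_le_inner_of_mem_sphere hρ'0 h₁] at hp₁
  rw [mem_closedBall_iff_le_inner_of_mem_sphere hρ'0 h₃] at hp₃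
  rw [mem_closedBall_iff_le_inner_of_mem_sphere hρ'0 h₂]
  set t := ρ ^ 2 + ‖c' - c‖ ^ 2 - ρ' ^ 2
  have ht : ‖c' - c‖ ^ 2 ≤ t := by nlinarith [norm_nonneg (p₁ - c), mem_sphere_iff_norm.mp h₁]
  have hinner : a * ⟪p₂ - c, c' - c⟫ = b * ⟪p₁ - c, c' - c⟫ + d * ⟪p₃ - c, c' - c⟫ := by
    rw [← real_inner_smul_left, hcomb, inner_add_left, real_inner_smul_left, real_inner_smul_left]
  rcases ha.eq_or_lt with rfl | ha
  · -- `p₃ - c` is opposite to `p₁ - c`, so `t ≤ 0`, which forces `c' = c`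
    have : t ≤ 0 := by nlinarith
    have hc' : ‖c' - c‖ = 0 := by nlinarith [norm_nonneg (c' - c)]
    rw [norm_eq_zero.mp hc', inner_zero_right]
    linarith
  · nlinarith

end InnerProductSpace

lemma sin_add_le_sin_add_sin {x y : ℝ} (hx : 0 ≤ sin x) (hy : 0 ≤ sin y) :
    sin (x + y) ≤ sin x + sin y := by
  rw [sin_add]
  nlinarith [cos_le_one x, cos_le_one y]

lemma exp_cwAngle_mul_I (c a b : ℂ) :
    Complex.exp (cwAngle c a b * Complex.I) =
      Complex.exp (Complex.arg ((a - c) / (b - c)) * Complex.I) := by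
  unfold cwAngle
  split_ifs
  · push_cast
    exact Complex.exp_mul_I_periodic _
  · rfl

lemma sub_eq_mul_exp_neg_cwAngle {c a b : ℂ} (hab : ‖a - c‖ = ‖b - c‖) :
    b - c = (a - c) * Complex.exp (-(cwAngle c a b * Complex.I)) := by
  rcases eq_or_ne (b - c) 0 with hb | hb
  · have ha : a - c = 0 := by rw [← norm_eq_zero, hab, hb, norm_zero]
    simp [hb, ha]
  have hquot : ‖(a - c) / (b - c)‖ = 1 := by
    rw [norm_div, hab, div_self (norm_ne_zero_iff.mpr hb)]
  have ha : a - c ≠ 0 := norm_ne_zero_iff.mp (hab ▸ norm_ne_zero_iff.mpr hb)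
  have key : Complex.exp (cwAngle c a b * Complex.I) = (a - c) / (b - c) := by
    have h := Complex.norm_mul_exp_arg_mul_I ((a - c) / (b - c))
    rwa [hquot, Complex.ofReal_one, one_mul, ← exp_cwAngle_mul_I] at h
  rw [Complex.exp_neg, key, inv_div]
  field_simp

lemma sin_mul_exp_neg_mul_I (α β : ℝ) :
    (sin β : ℂ) * Complex.exp (-(α * Complex.I)) =
      sin (β - α) + sin α * Complex.exp (-(β * Complex.I)) := by
  simp only [← neg_mul, ← Complex.ofReal_neg, Complex.exp_mul_I, ← Complex.ofReal_cos,
    ← Complex.ofReal_sin, Real.cos_neg, Real.sin_neg, Real.sin_sub]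
  push_cast
  ring

lemma sin_cwAngle_smul_sub_eq {c p₁ p₂ p₃ : ℂ} (h₂ : ‖p₁ - c‖ = ‖p₂ - c‖)
    (h₃ : ‖p₁ - c‖ = ‖p₃ - c‖) :
    sin (cwAngle c p₁ p₃) • (p₂ - c) =
      sin (cwAngle c p₁ p₃ - cwAngle c p₁ p₂) • (p₁ - c) + sin (cwAngle c p₁ p₂) • (p₃ - c) := by
  simp only [Complex.real_smul]
  rw [sub_eq_mul_exp_neg_cwAngle h₂, sub_eq_mul_exp_neg_cwAngle h₃]
  linear_combination (p₁ - c) * sin_mul_exp_neg_mul_I (cwAngle c p₁ p₂) (cwAngle c p₁ p₃)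

theorem middle_point_noncritical_general
    (P : Set ℂ) (c : ℂ) (ρ : ℝ) (hmec : IsMEC c ρ P)
    (p₁ p₂ p₃ : ℂ) (hp₁ : p₁ ∈ P) (hp₃ : p₃ ∈ P)
    (hs₁ : p₁ ∈ Metric.sphere c ρ) (hs₂ : p₂ ∈ Metric.sphere c ρ)
    (hs₃ : p₃ ∈ Metric.sphere c ρ)
    (h₁₂ : p₁ ≠ p₂) (h₂₃ : p₂ ≠ p₃)
    (hbet₁ : 0 < cwAngle c p₁ p₂) (hbet₂ : cwAngle c p₁ p₂ < cwAngle c p₁ p₃)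
    (hangle : cwAngle c p₁ p₃ ≤ π) :
    IsMEC c ρ (P \ {p₂}) := by
  set α := cwAngle c p₁ p₂
  set β := cwAngle c p₁ p₃
  have hα : 0 < sin α := sin_pos_of_pos_of_lt_pi hbet₁ (hbet₂.trans_le hangle)
  have hβα : 0 < sin (β - α) := sin_pos_of_pos_of_lt_pi (sub_pos.2 hbet₂) (by linarith)
  have hβ : 0 ≤ sin β := sin_nonneg_of_nonneg_of_le_pi (by linarith) hangle
  have hcomb : sin β • (p₂ - c) = sin (β - α) • (p₁ - c) + sin α • (p₃ - c) :=
    sin_cwAngle_smul_sub_eq ((mem_sphere_iff_norm.1 hs₁).trans (mem_sphere_iff_norm.1 hs₂).symm)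
      ((mem_sphere_iff_norm.1 hs₁).trans (mem_sphere_iff_norm.1 hs₃).symm)
  refine hmec.of_subset Set.sdiff_subset fun c' ρ' hρ' hcover q hq => ?_
  by_cases hq₂ : q = p₂
  · subst hq₂
    have hsum : sin β ≤ sin (β - α) + sin α := by
      simpa using sin_add_le_sin_add_sin hβα.le hα.le
    exact mem_closedBall_of_smul_sub_eq hs₁ hs₂ hs₃ hρ' hβ hβα.le hα.le (by positivity) hsum
      hcomb (hcover ⟨hp₁, h₁₂⟩) (hcover ⟨hp₃, h₂₃.symm⟩)
  · exact hcover ⟨hq, hq₂⟩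

/-- Let `p₁, p₂, p₃` be three consecutive points of `P` in clockwise order on
the minimum enclosing circle of `P` (no other point of `P` lies on the open
clockwise arc from `p₁` to `p₃`, on which `p₂` lies).  If the clockwise angle at
the center from `p₁` to `p₃` is at most `π`, then `p₂` is non-critical:
removing it does not change the minimum enclosing circle. -/
theorem middle_point_noncritical
    (P : Set ℂ) (hP : P.Finite) (c : ℂ) (ρ : ℝ) (hmec : IsMEC c ρ P)
    (p₁ p₂ p₃ : ℂ) (hp₁ : p₁ ∈ P) (hp₂ : p₂ ∈ P) (hp₃ : p₃ ∈ P)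
    (hs₁ : p₁ ∈ Metric.sphere c ρ) (hs₂ : p₂ ∈ Metric.sphere c ρ)
    (hs₃ : p₃ ∈ Metric.sphere c ρ)
    (h₁₂ : p₁ ≠ p₂) (h₂₃ : p₂ ≠ p₃) (h₁₃ : p₁ ≠ p₃)
    (hbet₁ : 0 < cwAngle c p₁ p₂) (hbet₂ : cwAngle c p₁ p₂ < cwAngle c p₁ p₃)
    (hconsec : ∀ q ∈ P, q ∈ Metric.sphere c ρ →
      0 < cwAngle c p₁ q → cwAngle c p₁ q < cwAngle c p₁ p₃ → q = p₂)
    (hangle : cwAngle c p₁ p₃ ≤ π) :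
    IsMEC c ρ (P \ {p₂}) :=
  middle_point_noncritical_general P c ρ hmec p₁ p₂ p₃ hp₁ hp₃ hs₁ hs₂ hs₃ h₁₂ h₂₃ hbet₁ hbet₂
    hangle
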